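/- If there exists a schedule of length l with respect to life spans w, then there exists a schedule of length l with respect to w in which every slot is a minimum reliable solution. In particular, if l is the maximum lifetime of the jammer network, there exists an optimal schedule D : Fin l → Finset J such that D i is a minimum reliable solution for every i. -/
import Mathlib


open Metric

/-- A finite set `A` of jammers is *reliable* if activating exactly the jammers in `A`
satisfies the SINR threshold constraints on the storage boundary `S` and the fence
boundary `F`. -/
def Reliable {J : Type*} (x : J → EuclideanSpace ℝ (Fin 2))
    (S F : Set (EuclideanSpace ℝ (Fin 2))) (PT PJ δ1 δ2 γ : ℝ) (A : Finset J) : Prop :=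
  (∀ s ∈ S, ∑ j ∈ A, dist (x j) s ^ (-γ) ≤ PT / (PJ * δ1)) ∧
  (∀ p ∈ F, ∑ j ∈ A, dist (x j) p ^ (-γ) ≥ PT * infDist p S ^ (-γ) / (PJ * δ2))

/-- `D : Fin l → Finset J` is a *schedule of length `l`* for life spans `w` if every
slot is reliable and each jammer `j` is active in at most `w j` slots. -/
def IsSchedule {J : Type*} [DecidableEq J] (x : J → EuclideanSpace ℝ (Fin 2))
    (S F : Set (EuclideanSpace ℝ (Fin 2))) (PT PJ δ1 δ2 γ : ℝ) (w : J → ℕ)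
    (l : ℕ) (D : Fin l → Finset J) : Prop :=
  (∀ i, Reliable x S F PT PJ δ1 δ2 γ (D i)) ∧
  ∀ j, (Finset.univ.filter fun i => j ∈ D i).card ≤ w j

/-- `M` is a *minimum reliable solution* if `M` is reliable and no proper subset of `M`
is reliable. -/
def MinReliable {J : Type*} (x : J → EuclideanSpace ℝ (Fin 2))
    (S F : Set (EuclideanSpace ℝ (Fin 2))) (PT PJ δ1 δ2 γ : ℝ) (M : Finset J) : Prop :=
  Reliable x S F PT PJ δ1 δ2 γ M ∧ ∀ N ⊂ M, ¬ Reliable x S F PT PJ δ1 δ2 γ N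

lemma exists_minReliable_subset {J : Type*} (x : J → EuclideanSpace ℝ (Fin 2))
    (S F : Set (EuclideanSpace ℝ (Fin 2))) (PT PJ δ1 δ2 γ : ℝ) (A : Finset J)
    (hA : Reliable x S F PT PJ δ1 δ2 γ A) :
    ∃ M ⊆ A, MinReliable x S F PT PJ δ1 δ2 γ M := by
  induction A using Finset.strongInduction with
  | _ A ih =>
    by_cases h : ∀ N ⊂ A, ¬ Reliable x S F PT PJ δ1 δ2 γ N
    · exact ⟨A, Finset.Subset.refl A, hA, h⟩
    · push_neg at h
      obtain ⟨N, hN, hNr⟩ := h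
      obtain ⟨M, hM, hMmin⟩ := ih N hN hNr
      exact ⟨M, hM.trans hN.subset, hMmin⟩

/-- If a schedule of length `l` exists, then a schedule of length `l` all of whose slots
are minimum reliable solutions exists; in particular there is an optimal schedule all of
whose slots are minimum reliable solutions. -/
theorem exists_schedule_of_minReliable {J : Type*} [DecidableEq J]
    (x : J → EuclideanSpace ℝ (Fin 2)) (S F : Set (EuclideanSpace ℝ (Fin 2)))
    (PT PJ δ1 δ2 γ : ℝ) (w : J → ℕ) :
    (∀ (l : ℕ), (∃ D : Fin l → Finset J, IsSchedule x S F PT PJ δ1 δ2 γ w l D) →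
      ∃ D : Fin l → Finset J, IsSchedule x S F PT PJ δ1 δ2 γ w l D ∧
        ∀ i, MinReliable x S F PT PJ δ1 δ2 γ (D i)) ∧
    (∀ l : ℕ,
      IsGreatest {l' : ℕ | ∃ D : Fin l' → Finset J, IsSchedule x S F PT PJ δ1 δ2 γ w l' D} l →
      ∃ D : Fin l → Finset J, IsSchedule x S F PT PJ δ1 δ2 γ w l D ∧
        ∀ i, MinReliable x S F PT PJ δ1 δ2 γ (D i)) := by
  have main : ∀ (l : ℕ), (∃ D : Fin l → Finset J, IsSchedule x S F PT PJ δ1 δ2 γ w l D) →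
      ∃ D : Fin l → Finset J, IsSchedule x S F PT PJ δ1 δ2 γ w l D ∧
        ∀ i, MinReliable x S F PT PJ δ1 δ2 γ (D i) := by
    rintro l ⟨D, hrel, hcard⟩
    choose M hMsub hMmin using fun i =>
      exists_minReliable_subset x S F PT PJ δ1 δ2 γ (D i) (hrel i)
    refine ⟨M, ⟨fun i => (hMmin i).1, fun j => le_trans ?_ (hcard j)⟩, hMmin⟩
    refine Finset.card_le_card fun i hi => ?_
    simp only [Finset.mem_filter] at hi ⊢
    exact ⟨hi.1, hMsub i hi.2⟩
  exact ⟨main, fun l hl => main l hl.1⟩
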